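/- Let k be a positive integer, R a real number with 0 < R < 1, and m a positive real number. Then for all nonnegative real numbers c₀, c₁, ..., c_{2k} satisfying Σ_{s=0}^{2k} c_s = m and Σ_{s=0}^{2k} s·c_s ≤ 2kRm, one has Σ_{s=0}^{2k} c_s·P[s] < (1/2 + R)·m. -/

import Mathlib

/-! Every profile value lies strictly below the linear bound `1/2 + s/(2k)`; for `2 ≤ s ≤ k` this
is `2k < s · 2^(k-s+2)`, which follows from `s + d ≤ s · 2^d`. Averaging the strict bound against
the weights `c s` (not all zero, since their total is `m > 0`) turns the budget constraint
`∑ s c_s ≤ 2kRm` into the claim. -/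

/-- The overlap profile `P[s]` of the Maiorana–McFarland target set:
`P[0] = 1/2 - 2^{-(k+1)}`, `P[1] = 1/2`, `P[s] = 1/2 + 2^{-(k-s+2)}` for
`1 < s ≤ k`, and `P[s] = 1` for `k < s ≤ 2k`. -/
noncomputable def Pfun (k : ℕ) (s : ℕ) : ℝ :=
  if s = 0 then 1 / 2 - (2 : ℝ) ^ (-((k : ℤ) + 1))
  else if s = 1 then 1 / 2
  else if s ≤ k then 1 / 2 + (2 : ℝ) ^ (-((k : ℤ) - (s : ℤ) + 2))
  else 1

lemma Nat.add_le_mul_two_pow {s : ℕ} (hs : 1 ≤ s) (d : ℕ) : s + d ≤ s * 2 ^ d := by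
  have hd : d + 1 ≤ 2 ^ d := Nat.lt_two_pow_self
  nlinarith

lemma Finset.sum_mul_lt_sum_mul_of_sum_pos {ι α : Type*} [Ring α] [LinearOrder α]
    [IsStrictOrderedRing α] {s : Finset ι} {c f g : ι → α} (hc : ∀ i ∈ s, 0 ≤ c i)
    (hpos : 0 < ∑ i ∈ s, c i) (hfg : ∀ i ∈ s, f i < g i) :
    ∑ i ∈ s, c i * f i < ∑ i ∈ s, c i * g i := by
  obtain ⟨i, hi, hci⟩ := Finset.exists_ne_zero_of_sum_ne_zero hpos.ne'
  refine Finset.sum_lt_sum (fun j hj => ?_) ⟨i, hi, ?_⟩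
  · exact mul_le_mul_of_nonneg_left (hfg j hj).le (hc j hj)
  · exact mul_lt_mul_of_pos_left (hfg i hi) ((hc i hi).lt_of_ne' hci)

lemma two_pow_neg_lt_div {k s : ℕ} (hs : 1 ≤ s) (hsk : s ≤ k) :
    (2 : ℝ) ^ (-((k : ℤ) - (s : ℤ) + 2)) < s / (2 * k) := by
  have hk : 0 < k := by omega
  have hexp : -((k : ℤ) - (s : ℤ) + 2) = -((k - s + 2 : ℕ) : ℤ) := by omega
  have hnat : 2 * k < s * 2 ^ (k - s + 2) := by
    have := Nat.add_le_mul_two_pow hs (k - s)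
    rw [pow_add, ← mul_assoc]
    omega
  have hreal : (2 * k : ℝ) < s * 2 ^ (k - s + 2) := by exact_mod_cast hnat
  rw [hexp, zpow_neg, zpow_natCast, inv_eq_one_div, div_lt_div_iff₀ (by positivity)
    (by positivity : (0 : ℝ) < 2 * k)]
  linarith

lemma Pfun_lt_half_add_div {k : ℕ} (hk : 0 < k) (s : ℕ) :
    Pfun k s < 1 / 2 + s / (2 * k) := by
  have hk' : (0 : ℝ) < 2 * k := by positivity
  unfold Pfun
  split_ifs with h0 h1 h2
  · subst h0
    have : (0 : ℝ) < 2 ^ (-((k : ℤ) + 1)) := by positivity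
    simp only [Nat.cast_zero, zero_div]
    linarith
  · subst h1
    have : (0 : ℝ) < (1 : ℕ) / (2 * k) := by positivity
    linarith
  · linarith [two_pow_neg_lt_div (by omega : 1 ≤ s) h2]
  · have hks : (k : ℝ) < s := by exact_mod_cast Nat.lt_of_not_le h2
    have : (1 : ℝ) / 2 < s / (2 * k) := by
      rw [lt_div_iff₀ hk']
      linarith
    linarith

theorem stmt_10_general (k : ℕ) (hk : 0 < k) (R m : ℝ)
    (hm : 0 < m) (c : ℕ → ℝ) (hc : ∀ s ≤ 2 * k, 0 ≤ c s)
    (hsum : ∑ s ∈ Finset.range (2 * k + 1), c s = m)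
    (hbudget : ∑ s ∈ Finset.range (2 * k + 1), (s : ℝ) * c s ≤ 2 * k * R * m) :
    ∑ s ∈ Finset.range (2 * k + 1), c s * Pfun k s < (1 / 2 + R) * m := by
  have hk' : (0 : ℝ) < 2 * k := by positivity
  calc ∑ s ∈ Finset.range (2 * k + 1), c s * Pfun k s
      < ∑ s ∈ Finset.range (2 * k + 1), c s * (1 / 2 + s / (2 * k)) :=
        Finset.sum_mul_lt_sum_mul_of_sum_pos
          (fun s hs => hc s (Nat.lt_succ_iff.mp (Finset.mem_range.mp hs)))
          (hsum ▸ hm) (fun s _ => Pfun_lt_half_add_div hk s)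
    _ = 1 / 2 * ∑ s ∈ Finset.range (2 * k + 1), c s
          + (∑ s ∈ Finset.range (2 * k + 1), (s : ℝ) * c s) / (2 * k) := by
        rw [Finset.mul_sum, Finset.sum_div, ← Finset.sum_add_distrib]
        exact Finset.sum_congr rfl fun s _ => by ring
    _ ≤ 1 / 2 * m + 2 * k * R * m / (2 * k) := by rw [hsum]; gcongr
    _ = (1 / 2 + R) * m := by field_simp

theorem stmt_10 (k : ℕ) (hk : 0 < k) (R m : ℝ) (hR0 : 0 < R) (hR1 : R < 1)
    (hm : 0 < m) (c : ℕ → ℝ) (hc : ∀ s ≤ 2 * k, 0 ≤ c s)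
    (hsum : ∑ s ∈ Finset.range (2 * k + 1), c s = m)
    (hbudget : ∑ s ∈ Finset.range (2 * k + 1), (s : ℝ) * c s ≤ 2 * k * R * m) :
    ∑ s ∈ Finset.range (2 * k + 1), c s * Pfun k s < (1 / 2 + R) * m :=
  stmt_10_general k hk R m hm c hc hsum hbudget
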